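/- arXiv:2306.09819 — 2 statements merged into one kernel-verified Lean document; each statement's English description precedes it below -/
import Mathlib

section
/- Theorem 1, part (b): dimension equivariance of the dataset encoder. Let E be a real vector space, n, d ≥ 1, x : Fin n → Fin d → ℝ and y : Fin n → ℝ. Let L : ℝ × ℝ → E be any map, let T₁, T₂ : (Fin n → E) → (Fin n → E) and T₃ : (Fin n → E × E) → (Fin n → E × E) be permutation equivariant maps, and let T₄ : (Fin d → E × E) → (Fin d → E × E) be permutation equivariant. Define the dataset-encoder output h : Fin d → E × E of (x, y) by: H_i = T₁ (fun j => L (x j i, y j)); m = (fun j => (1/d) • ∑_{i} H_i j); p = T₂ m; G_i = T₃ (fun j => (p j, H_i j)); h_i = (1/n) • ∑_{j} G_i j; h = T₄ (fun i => h_i). Then for every permutation τ of Fin d, the dataset-encoder output h' of the dimension-shuffled dataset with inputs x' j i = x j (τ i) satisfies h' = h ∘ τ, i.e. h' i = h (τ i) for all i : Fin d. -/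
/-- The dataset encoder: element-wise embedding `L`, shared transformer `T₁`
per dimension, mean aggregation over dimensions, transformer `T₂` over
datapoints, element-wise concatenation, shared transformer `T₃` per dimension,
mean aggregation over datapoints, and a final transformer `T₄` over dimensions. -/
noncomputable def datasetEncoder {E : Type*} [AddCommGroup E] [Module ℝ E] {n d : ℕ}
    (L : ℝ × ℝ → E)
    (T₁ T₂ : (Fin n → E) → (Fin n → E))
    (T₃ : (Fin n → E × E) → (Fin n → E × E))
    (T₄ : (Fin d → E × E) → (Fin d → E × E))
    (x : Fin n → Fin d → ℝ) (y : Fin n → ℝ) : Fin d → E × E :=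
  let H : Fin d → Fin n → E := fun i => T₁ (fun j => L (x j i, y j))
  let m : Fin n → E := fun j => ((1 : ℝ) / d) • ∑ i, H i j
  let p : Fin n → E := T₂ m
  let G : Fin d → Fin n → E × E := fun i => T₃ (fun j => (p j, H i j))
  T₄ (fun i => ((1 : ℝ) / n) • ∑ j, G i j)

/-- Theorem 1 (b): the dataset encoder is permutation equivariant to a
shuffling of the input dimensions. -/
theorem datasetEncoder_equivariant_dimension_shuffle
    {E : Type*} [AddCommGroup E] [Module ℝ E] {n d : ℕ}
    (hn : 1 ≤ n) (hd : 1 ≤ d)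
    (L : ℝ × ℝ → E)
    (T₁ T₂ : (Fin n → E) → (Fin n → E))
    (T₃ : (Fin n → E × E) → (Fin n → E × E))
    (T₄ : (Fin d → E × E) → (Fin d → E × E))
    (hT₁ : ∀ (π : Equiv.Perm (Fin n)) (v : Fin n → E), T₁ (v ∘ ⇑π) = (T₁ v) ∘ ⇑π)
    (hT₂ : ∀ (π : Equiv.Perm (Fin n)) (v : Fin n → E), T₂ (v ∘ ⇑π) = (T₂ v) ∘ ⇑π)
    (hT₃ : ∀ (π : Equiv.Perm (Fin n)) (v : Fin n → E × E), T₃ (v ∘ ⇑π) = (T₃ v) ∘ ⇑π)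
    (hT₄ : ∀ (τ : Equiv.Perm (Fin d)) (v : Fin d → E × E), T₄ (v ∘ ⇑τ) = (T₄ v) ∘ ⇑τ)
    (x : Fin n → Fin d → ℝ) (y : Fin n → ℝ) (τ : Equiv.Perm (Fin d)) :
    datasetEncoder L T₁ T₂ T₃ T₄ (fun j i => x j (τ i)) y
      = (datasetEncoder L T₁ T₂ T₃ T₄ x y) ∘ ⇑τ := by
  unfold datasetEncoder
  simp only
  set H : Fin d → Fin n → E := fun i => T₁ (fun j => L (x j i, y j)) with hH
  have hm : (fun j => ((1 : ℝ) / d) • ∑ i, T₁ (fun j' => L (x j' (τ i), y j')) j)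
      = (fun j => ((1 : ℝ) / d) • ∑ i, H i j) := by
    funext j
    congr 1
    exact Fintype.sum_equiv τ _ _ (fun i => rfl)
  rw [hm]
  have : (fun i => ((1 : ℝ) / n) • ∑ j,
      T₃ (fun j' => (T₂ (fun j'' => ((1 : ℝ) / d) • ∑ i', H i' j'') j', H (τ i) j')) j)
      = (fun i => ((1 : ℝ) / n) • ∑ j,
      T₃ (fun j' => (T₂ (fun j'' => ((1 : ℝ) / d) • ∑ i', H i' j'') j', H i j')) j) ∘ ⇑τ := rfl
  rw [this, hT₄]
end

section
/- Theorem 3, part (a): dimension equivariance of the kernel encoder-decoder. Let X be a real vector space and C a type. Let K₁ : ∀ {M : ℕ}, (Fin M → X) → C → (Fin M → X) and K₂ : ∀ {M : ℕ}, (Fin M → X) → (C × X) → (Fin M → X) be families of maps that are, for every M, permutation equivariant given the context, and let T : (Fin d → X) → (Fin d → X) be permutation equivariant. Given dataset embeddings h : Fin d → C, sequence lengths Nᵢ ≥ 1 for i : Fin d, and base-symbol encodings V : ∀ i, Fin (N i) → X, define the kernel encoder-decoder output by: V₁ i = K₁ (V i) (h i); v i = (1/(N i)) • ∑_{j} V₁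 i j; w = T v; Ṽ i = K₂ (V₁ i) (h i, w i). Then for every permutation τ of Fin d, running the same pipeline on the dimension-permuted inputs h ∘ τ, N ∘ τ, and (fun i => V (τ i)), yields output Ṽ' with Ṽ' i = Ṽ (τ i) for every i : Fin d. -/
/-- The kernel encoder-decoder: a shared context-equivariant block stack `K₁`
per dimension with the dataset embedding as context, mean aggregation per
dimension, a transformer `T` over dimensions, and a shared context-equivariant
block stack `K₂` with the concatenated context. -/
noncomputable def kernelEncoderDecoder {X C : Type*} [AddCommGroup X] [Module ℝ X] {d : ℕ}
    (K₁ : ∀ {M : ℕ}, (Fin M → X) → C → (Fin M → X))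
    (K₂ : ∀ {M : ℕ}, (Fin M → X) → (C × X) → (Fin M → X))
    (T : (Fin d → X) → (Fin d → X))
    (h : Fin d → C) (N : Fin d → ℕ) (V : ∀ i, Fin (N i) → X) :
    ∀ i, Fin (N i) → X :=
  let V₁ : ∀ i, Fin (N i) → X := fun i => K₁ (V i) (h i)
  let v : Fin d → X := fun i => ((1 : ℝ) / (N i)) • ∑ j, V₁ i j
  let w : Fin d → X := T v
  fun i => K₂ (V₁ i) (h i, w i)

/-- Theorem 3 (a): the kernel encoder-decoder is permutation equivariant to a
shuffling of the input dimensions. -/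
theorem kernelEncoderDecoder_equivariant_dimension_shuffle
    {X C : Type*} [AddCommGroup X] [Module ℝ X] {d : ℕ}
    (K₁ : ∀ {M : ℕ}, (Fin M → X) → C → (Fin M → X))
    (K₂ : ∀ {M : ℕ}, (Fin M → X) → (C × X) → (Fin M → X))
    (T : (Fin d → X) → (Fin d → X))
    (hK₁ : ∀ (M : ℕ) (π : Equiv.Perm (Fin M)) (v : Fin M → X) (c : C),
      K₁ (v ∘ ⇑π) c = (K₁ v c) ∘ ⇑π)
    (hK₂ : ∀ (M : ℕ) (π : Equiv.Perm (Fin M)) (v : Fin M → X) (c : C × X),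
      K₂ (v ∘ ⇑π) c = (K₂ v c) ∘ ⇑π)
    (hT : ∀ (τ : Equiv.Perm (Fin d)) (v : Fin d → X), T (v ∘ ⇑τ) = (T v) ∘ ⇑τ)
    (h : Fin d → C) (N : Fin d → ℕ) (hN : ∀ i, 1 ≤ N i)
    (V : ∀ i, Fin (N i) → X) (τ : Equiv.Perm (Fin d)) :
    ∀ i : Fin d,
      kernelEncoderDecoder (@K₁) (@K₂) T (h ∘ ⇑τ) (N ∘ ⇑τ) (fun i => V (τ i)) i
        = kernelEncoderDecoder (@K₁) (@K₂) T h N V (τ i) := by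
  intro i
  show K₂ (K₁ (V (τ i)) (h (τ i)))
      (h (τ i), T (fun k => ((1 : ℝ) / ((N ∘ ⇑τ) k)) • ∑ j, K₁ (V (τ k)) (h (τ k)) j) i)
    = K₂ (K₁ (V (τ i)) (h (τ i)))
      (h (τ i), T (fun k => ((1 : ℝ) / (N k)) • ∑ j, K₁ (V k) (h k) j) (τ i))
  have key : (fun k => ((1 : ℝ) / ((N ∘ ⇑τ) k)) • ∑ j, K₁ (V (τ k)) (h (τ k)) j)
      = (fun k => ((1 : ℝ) / (N k)) • ∑ j, K₁ (V k) (h k) j) ∘ ⇑τ := rfl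
  rw [key, hT]
  rfl
end
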